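/- arXiv:2601.17445 — 10 statements merged into one kernel-verified Lean document; each statement's English description precedes it below -/
import Mathlib

section
/- For all natural numbers n and all integers ℓ ≥ 1, the quantum numbers satisfy [n·ℓ] = [ℓ] · ([n] ∘ ([ℓ+1] − [ℓ−1])) in ℤ[δ], where ∘ denotes composition of polynomials (i.e. [n·ℓ] equals [ℓ] times the polynomial [n] evaluated at the polynomial [ℓ+1] − [ℓ−1]). -/
open Polynomial

/-- The quantum number polynomials `[n] ∈ ℤ[δ]`, defined by `[0] = 0`, `[1] = 1`,
`[n+2] = δ·[n+1] − [n]`. -/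
noncomputable def qn : ℕ → Polynomial ℤ
  | 0 => 0
  | 1 => 1
  | n + 2 => X * qn (n + 1) - qn n

lemma qn_add (m k : ℕ) : qn (m + k + 1) = qn (m + 1) * qn (k + 1) - qn m * qn k := by
  induction k using Nat.twoStepInduction generalizing m with
  | zero => simp [qn]
  | one => show qn (m + 2) = _ * qn 2 - _ * qn 1; simp [qn]; ring
  | more k ih1 ih2 =>
      rw [show m + (k + 2) + 1 = (m + k + 1) + 2 by ring,
        show qn ((m + k + 1) + 2) = X * qn (m + k + 1 + 1) - qn (m + k + 1) from rfl,
        show m + k + 1 + 1 = m + (k + 1) + 1 by ring, ih2, ih1,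
        show qn (k + 2 + 1) = X * qn (k + 2) - qn (k + 1) from rfl,
        show qn (k + 2) = X * qn (k + 1) - qn k from rfl]
      ring

lemma qn_sub (b c : ℕ) : qn (b + c) * qn (b + 1) - qn (b + c + 1) * qn b = qn c := by
  induction b with
  | zero => simp [qn]
  | succ b ih =>
      have h1 : b + 1 + c = (b + c) + 1 := by ring
      rw [h1,
        show qn (b + c + 1 + 1) = X * qn (b + c + 1) - qn (b + c) from rfl,
        show qn (b + 1 + 1) = X * qn (b + 1) - qn b from rfl]
      linear_combination ih

lemma qn_step (m c : ℕ) :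
    qn ((m + 1) + c + (m + 1)) = (qn (m + 2) - qn m) * qn ((m + 1) + c) - qn c := by
  have h := qn_add (m + 1 + c) m
  have hs := qn_sub (m + 1) c
  have : m + 1 + c + m + 1 = m + 1 + c + (m + 1) := by ring
  rw [this] at h
  rw [h]
  have hs' : qn (m + 1 + c) * qn (m + 2) - qn (m + 1 + c + 1) * qn (m + 1) = qn c := by
    simpa using qn_sub (m + 1) c
  linear_combination -hs'

/-- `[n·ℓ] = [ℓ] · ([n] ∘ ([ℓ+1] − [ℓ−1]))` in `ℤ[δ]`. -/
theorem qn_mul (n ℓ : ℕ) (hℓ : 1 ≤ ℓ) :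
    qn (n * ℓ) = qn ℓ * (qn n).comp (qn (ℓ + 1) - qn (ℓ - 1)) := by
  obtain ⟨m, rfl⟩ : ∃ m, ℓ = m + 1 := ⟨ℓ - 1, (Nat.succ_pred_eq_of_pos hℓ).symm⟩
  simp only [Nat.add_sub_cancel]
  induction n using Nat.twoStepInduction with
  | zero => simp [qn]
  | one => simp [qn]
  | more n ih1 ih2 =>
      have key : qn ((n + 2) * (m + 1)) =
          (qn (m + 1 + 1) - qn m) * qn ((n + 1) * (m + 1)) - qn (n * (m + 1)) := by
        have := qn_step m (n * (m + 1))
        have he : (n + 2) * (m + 1) = (m + 1) + n * (m + 1) + (m + 1) := by ring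
        have he2 : (n + 1) * (m + 1) = (m + 1) + n * (m + 1) := by ring
        rw [he, he2, this]
      rw [key, ih1, ih2, show qn (n + 2) = X * qn (n + 1) - qn n from rfl]
      simp only [sub_comp, mul_comp, X_comp]
      ring
end

section
/- For every integer k ≥ 3 there exists a monic polynomial ψ ∈ ℤ[X] of degree φ(k)/2 (where φ is Euler's totient function) whose image in ℚ[X] is irreducible, such that in the field of rational functions ℚ(q) one has Φ_k(q) = q^{φ(k)/2} · ψ(q + q⁻¹), where Φ_k denotes the k-th cyclotomic polynomial and q denotes the rational-function variable. -/
/-!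
Since `Φ_k` is self-reciprocal of even degree `2n`, grouping its coefficients symmetrically writes
`q⁻ⁿ Φ_k(q)` as a combination of the Laurent polynomials `qⁱ + q⁻ⁱ = Dᵢ(q + q⁻¹)`, where `Dᵢ` is the
monic Dickson polynomial `dickson 1 1 i`; this gives `ψ`, monic of degree `n`. A factorization
`ψ = f g` over `ℚ` would give `Φ_k = (X^{deg f} f(X + X⁻¹)) (X^{deg g} g(X + X⁻¹))`, a factorization
into polynomials of degrees `2 deg f` and `2 deg g`, so irreducibility of `Φ_k` forces one of `f`,
`g` to be constant.
-/

open Polynomial Finset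

namespace Polynomial

section Dickson

variable {R : Type*} [CommRing R] (k : ℕ) (a : R)

theorem natDegree_dickson_le : ∀ n, (dickson k a n).natDegree ≤ n
  | 0 => by rw [dickson_zero]; compute_degree
  | 1 => by rw [dickson_one]; exact natDegree_X_le
  | n + 2 => by
    rw [dickson_add_two]
    have h₁ := natDegree_dickson_le (n + 1)
    have h₀ := natDegree_dickson_le n
    refine (natDegree_sub_le _ _).trans (max_le ?_ ?_)
    · exact natDegree_mul_le.trans (by grw [natDegree_X_le]; omega)
    · exact natDegree_C_mul_le _ _ |>.trans (by omega)

theorem coeff_dickson_self : ∀ {n}, n ≠ 0 → (dickson k a n).coeff n = 1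
  | 1, _ => by simp
  | n + 2, _ => by
    rw [dickson_add_two, coeff_sub, coeff_X_mul, coeff_dickson_self n.succ_ne_zero, coeff_C_mul,
      coeff_eq_zero_of_natDegree_lt ((natDegree_dickson_le k a n).trans_lt (by omega))]
    ring

theorem aeval_dickson_one_one_add {A : Type*} [CommRing A] [Algebra R A] {x y : A}
    (hxy : x * y = 1) (n : ℕ) : aeval (x + y) (dickson 1 (1 : R) n) = x ^ n + y ^ n := by
  rw [aeval_def, eval₂_eq_eval_map, map_dickson, map_one, dickson_one_one_eval_add_inv _ _ hxy]

end Dickson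

theorem reverse_cyclotomic_rat {k : ℕ} (hk : 1 < k) :
    (cyclotomic k ℚ).reverse = cyclotomic k ℚ := by
  have hcoeff : (cyclotomic k ℚ).coeff 0 = 1 := cyclotomic_coeff_zero ℚ hk
  have hmonic : (cyclotomic k ℚ).reverse.Monic := by
    rw [Monic, reverse_leadingCoeff, trailingCoeff_eq_coeff_zero (by simp [hcoeff]), hcoeff]
  obtain ⟨ζ, hζ⟩ : ∃ ζ : ℂ, IsPrimitiveRoot ζ k := ⟨_, Complex.isPrimitiveRoot_exp k (by omega)⟩
  have : Invertible ζ := invertibleOfNonzero (hζ.ne_zero (by omega))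
  -- `ζ⁻¹` has minimal polynomial `Φ_k` and is a root of its reverse, since `ζ` is a root of `Φ_k`
  have hroot : aeval ζ⁻¹ (cyclotomic k ℚ).reverse = 0 := by
    rw [aeval_def, ← invOf_eq_inv, eval₂_reverse_eq_zero_iff, eval₂_eq_eval_map, map_cyclotomic]
    exact hζ.isRoot_cyclotomic (by omega)
  have hdvd := minpoly.dvd ℚ ζ⁻¹ hroot
  rw [← cyclotomic_eq_minpoly_rat hζ.inv (by omega)] at hdvd
  exact eq_of_monic_of_dvd_of_natDegree_le (cyclotomic.monic k ℚ) hmonic hdvd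
    (reverse_natDegree_le _)

theorem reflect_cyclotomic (R : Type*) [CommRing R] {k : ℕ} (hk : 1 < k) :
    (cyclotomic k R).reflect k.totient = cyclotomic k R := by
  have hℤ : (cyclotomic k ℤ).reflect k.totient = cyclotomic k ℤ := by
    apply map_injective (Int.castRingHom ℚ) Int.cast_injective
    rw [← reflect_map, map_cyclotomic, ← natDegree_cyclotomic k ℚ]
    exact reverse_cyclotomic_rat hk
  rw [← map_cyclotomic_int, reflect_map, hℤ]

section TracePoly

variable {R : Type*} [CommRing R]

noncomputable def tracePoly (p : R[X]) (n : ℕ) : R[X] :=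
  C (p.coeff n) + ∑ i ∈ range n, C (p.coeff (n + 1 + i)) * dickson 1 1 (i + 1)

theorem natDegree_tracePoly_le (p : R[X]) (n : ℕ) : (tracePoly p n).natDegree ≤ n := by
  refine (natDegree_add_le _ _).trans
    (max_le (by simp) (natDegree_sum_le_of_forall_le _ _ fun i hi => ?_))
  rw [mem_range] at hi
  exact (natDegree_C_mul_le _ _).trans ((natDegree_dickson_le 1 1 _).trans (by omega))

theorem coeff_tracePoly_self (p : R[X]) (n : ℕ) : (tracePoly p n).coeff n = p.coeff (2 * n) := by
  rcases n with _ | m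
  · simp [tracePoly]
  rw [tracePoly, coeff_add, coeff_C, if_neg m.succ_ne_zero, zero_add, finsetSum_coeff,
    sum_range_succ, sum_eq_zero, coeff_C_mul, coeff_dickson_self _ _ m.succ_ne_zero]
  · ring_nf
  · intro i hi
    rw [mem_range] at hi
    rw [coeff_C_mul, coeff_eq_zero_of_natDegree_lt
      ((natDegree_dickson_le _ _ _).trans_lt (by omega)), mul_zero]

theorem Monic.tracePoly {p : R[X]} {n : ℕ} (hp : p.Monic) (hdeg : p.natDegree = 2 * n) :
    (tracePoly p n).Monic :=
  monic_of_natDegree_le_of_coeff_eq_one n (natDegree_tracePoly_le p n)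
    (by rw [coeff_tracePoly_self, ← hdeg, hp.coeff_natDegree])

theorem natDegree_tracePoly {p : R[X]} {n : ℕ} (hp : p ≠ 0) (hdeg : p.natDegree = 2 * n) :
    (tracePoly p n).natDegree = n :=
  natDegree_eq_of_le_of_coeff_ne_zero (natDegree_tracePoly_le p n)
    (by rwa [coeff_tracePoly_self, ← hdeg, coeff_natDegree, leadingCoeff_ne_zero])

theorem map_tracePoly {S : Type*} [CommRing S] (f : R →+* S) (p : R[X]) (n : ℕ) :
    (tracePoly p n).map f = tracePoly (p.map f) n := by
  simp [tracePoly, Polynomial.map_sum, map_dickson]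

theorem aeval_eq_pow_mul_aeval_tracePoly {A : Type*} [CommRing A] [Algebra R A] {p : R[X]}
    {n : ℕ} (hdeg : p.natDegree ≤ 2 * n) (hpal : p.reflect (2 * n) = p) {x y : A}
    (hxy : x * y = 1) : aeval x p = x ^ n * aeval (x + y) (tracePoly p n) := by
  have hsymm : ∀ i < n, p.coeff (n - 1 - i) = p.coeff (n + 1 + i) := fun i hi => by
    nth_rw 1 [← hpal]
    rw [coeff_reflect, revAt_le (by omega), show 2 * n - (n - 1 - i) = n + 1 + i by omega]
  have hterm : ∀ i ∈ range n, x ^ n * (algebraMap R A (p.coeff (n + 1 + i)) *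
      (x ^ (i + 1) + y ^ (i + 1))) =
      p.coeff (n + 1 + i) • x ^ (n + 1 + i) + p.coeff (n - 1 - i) • x ^ (n - 1 - i) := by
    intro i hi
    rw [mem_range] at hi
    have hx : x ^ n * y ^ (i + 1) = x ^ (n - 1 - i) := by
      rw [show n = (n - 1 - i) + (i + 1) by omega, pow_add, mul_assoc, ← mul_pow, hxy, one_pow,
        mul_one, show n - 1 - i + (i + 1) - 1 - i = n - 1 - i by omega]
    rw [hsymm i hi, Algebra.smul_def, Algebra.smul_def, mul_add, ← hx,
      show n + 1 + i = n + (i + 1) by omega, pow_add]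
    ring
  calc aeval x p = ∑ j ∈ range (2 * n + 1), p.coeff j • x ^ j :=
        aeval_eq_sum_range' (by omega) x
    _ = ∑ j ∈ range n, p.coeff (n - 1 - j) • x ^ (n - 1 - j) + p.coeff n • x ^ n +
          ∑ i ∈ range n, p.coeff (n + 1 + i) • x ^ (n + 1 + i) := by
        rw [show 2 * n + 1 = n + 1 + n by ring, sum_range_add, sum_range_succ,
          sum_range_reflect (fun j => p.coeff j • x ^ j)]
    _ = x ^ n * aeval (x + y) (tracePoly p n) := by
        simp only [tracePoly, map_add, map_sum, map_mul, aeval_C, aeval_dickson_one_one_add hxy]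
        rw [mul_add, mul_sum, sum_congr rfl hterm, sum_add_distrib, Algebra.smul_def]
        ring

end TracePoly

section RatFunc

variable {R : Type*} [CommRing R] [IsDomain R]

theorem aeval_ratFuncX_injective :
    Function.Injective (aeval (R := R) (RatFunc.X : RatFunc R)) :=
  fun p q h => RatFunc.algebraMap_injective R (by simpa using h)

theorem _root_.RatFunc.X_mul_X_inv : (RatFunc.X : RatFunc R) * RatFunc.X⁻¹ = 1 :=
  mul_inv_cancel₀ ((map_ne_zero_iff _ (RatFunc.algebraMap_injective R)).mpr X_ne_zero)

end RatFunc

section Palindromize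

variable {R : Type*} [CommRing R]

noncomputable def palindromize (h : R[X]) : R[X] :=
  ∑ i ∈ range (h.natDegree + 1), C (h.coeff i) * (X ^ 2 + 1) ^ i * X ^ (h.natDegree - i)

@[simp]
theorem palindromize_C (c : R) : palindromize (C c) = C c := by
  simp [palindromize]

theorem aeval_palindromize {A : Type*} [CommRing A] [Algebra R A] {x y : A} (hxy : x * y = 1)
    (h : R[X]) : aeval x (palindromize h) = x ^ h.natDegree * aeval (x + y) h := by
  rw [palindromize, map_sum, aeval_eq_sum_range, mul_sum]
  refine sum_congr rfl fun i hi => ?_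
  have hsq : x ^ 2 + 1 = x * (x + y) := by rw [mul_add, hxy, sq]
  have hpow : x ^ h.natDegree = x ^ (h.natDegree - i) * x ^ i := by
    rw [← pow_add, Nat.sub_add_cancel (Nat.lt_succ_iff.mp (mem_range.mp hi))]
  simp only [map_mul, map_pow, map_add, aeval_X, aeval_C, map_one, Algebra.smul_def]
  rw [hsq, hpow, mul_pow]
  ring

theorem coeff_palindromize_two_mul_natDegree (h : R[X]) :
    (palindromize h).coeff (2 * h.natDegree) = h.leadingCoeff := by
  have hdeg : ((X : R[X]) ^ 2 + 1).natDegree ≤ 2 := by compute_degree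
  rw [palindromize, finsetSum_coeff, sum_range_succ, sum_eq_zero, zero_add, Nat.sub_self,
    pow_zero, mul_one, coeff_C_mul, mul_comm 2, coeff_pow_of_natDegree_le hdeg]
  · rw [coeff_add, coeff_X_pow_self, coeff_one, if_neg two_ne_zero, add_zero, one_pow, mul_one,
      leadingCoeff]
  · intro i hi
    rw [mem_range] at hi
    apply coeff_eq_zero_of_natDegree_lt
    calc (C (h.coeff i) * (X ^ 2 + 1) ^ i * X ^ (h.natDegree - i)).natDegree
        ≤ 2 * i + (h.natDegree - i) := by
          grw [natDegree_mul_le, natDegree_C_mul_le, natDegree_pow_le_of_le i hdeg,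
            natDegree_X_pow_le, mul_comm]
      _ < 2 * h.natDegree := by omega

theorem palindromize_mul [IsDomain R] (f g : R[X]) :
    palindromize (f * g) = palindromize f * palindromize g := by
  rcases eq_or_ne f 0 with rfl | hf
  · simp [palindromize]
  rcases eq_or_ne g 0 with rfl | hg
  · simp [palindromize]
  apply aeval_ratFuncX_injective
  simp only [map_mul, aeval_palindromize RatFunc.X_mul_X_inv]
  rw [natDegree_mul hf hg, pow_add]
  ring

theorem isUnit_of_isUnit_palindromize [IsDomain R] {f : R[X]} (hf : IsUnit (palindromize f)) :
    IsUnit f := by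
  have hd : f.natDegree = 0 := by
    by_contra hd
    have hcoeff := coeff_palindromize_two_mul_natDegree f
    rw [coeff_eq_zero_of_natDegree_lt (by rw [natDegree_eq_zero_of_isUnit hf]; omega)] at hcoeff
    exact leadingCoeff_ne_zero.mpr (by rintro rfl; simp at hd) hcoeff.symm
  rw [eq_C_of_natDegree_eq_zero hd] at hf ⊢
  rwa [palindromize_C] at hf

theorem irreducible_of_irreducible_palindromize [IsDomain R] {ψ : R[X]}
    (h : Irreducible (palindromize ψ)) : Irreducible ψ where
  not_isUnit hψ := h.not_isUnit <| by
    rwa [eq_C_of_natDegree_eq_zero (natDegree_eq_zero_of_isUnit hψ), palindromize_C,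
      ← eq_C_of_natDegree_eq_zero (natDegree_eq_zero_of_isUnit hψ)]
  isUnit_or_isUnit f g hfg := by
    rw [hfg, palindromize_mul] at h
    exact (h.isUnit_or_isUnit rfl).imp isUnit_of_isUnit_palindromize
      isUnit_of_isUnit_palindromize

theorem palindromize_tracePoly [IsDomain R] {p : R[X]} {n : ℕ} (hp : p ≠ 0)
    (hdeg : p.natDegree = 2 * n) (hpal : p.reflect (2 * n) = p) :
    palindromize (tracePoly p n) = p := by
  apply aeval_ratFuncX_injective
  rw [aeval_palindromize RatFunc.X_mul_X_inv, natDegree_tracePoly hp hdeg,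
    aeval_eq_pow_mul_aeval_tracePoly hdeg.le hpal RatFunc.X_mul_X_inv]

end Palindromize

end Polynomial

/-- For every `k ≥ 3` there is a monic polynomial `ψ ∈ ℤ[X]` of degree `φ(k)/2`,
irreducible over `ℚ`, such that `Φ_k(q) = q^(φ(k)/2) · ψ(q + q⁻¹)` in `ℚ(q)`. -/
theorem exists_psi_of_cyclotomic (k : ℕ) (hk : 3 ≤ k) :
    ∃ ψ : Polynomial ℤ, ψ.Monic ∧ ψ.natDegree = Nat.totient k / 2 ∧
      Irreducible (ψ.map (Int.castRingHom ℚ)) ∧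
      aeval (RatFunc.X : RatFunc ℚ) (Polynomial.cyclotomic k ℤ) =
        (RatFunc.X : RatFunc ℚ) ^ (Nat.totient k / 2) *
          aeval ((RatFunc.X : RatFunc ℚ) + (RatFunc.X : RatFunc ℚ)⁻¹) ψ := by
  set n := k.totient / 2
  have hφ : k.totient = 2 * n := (Nat.two_mul_div_two_of_even (Nat.totient_even (by omega))).symm
  have hdeg (R : Type) [CommRing R] [Nontrivial R] : (cyclotomic k R).natDegree = 2 * n := by
    rw [natDegree_cyclotomic, hφ]
  have hpal (R : Type) [CommRing R] : (cyclotomic k R).reflect (2 * n) = cyclotomic k R := by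
    rw [← hφ]
    exact reflect_cyclotomic R (by omega)
  refine ⟨tracePoly (cyclotomic k ℤ) n, (cyclotomic.monic k ℤ).tracePoly (hdeg ℤ),
    natDegree_tracePoly (cyclotomic_ne_zero k ℤ) (hdeg ℤ), ?_,
    aeval_eq_pow_mul_aeval_tracePoly (hdeg ℤ).le (hpal ℤ) RatFunc.X_mul_X_inv⟩
  rw [map_tracePoly, map_cyclotomic_int]
  apply irreducible_of_irreducible_palindromize
  rw [palindromize_tracePoly (cyclotomic_ne_zero k ℚ) (hdeg ℚ) (hpal ℚ)]
  exact cyclotomic.irreducible_rat (by omega)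
end

section
/- Suppose that for each integer k ≥ 3 a polynomial ψ_k ∈ ℤ[X] is given such that in the field of rational functions ℚ(q) one has Φ_k(q) = q^{φ(k)/2} · ψ_k(q + q⁻¹), where Φ_k is the k-th cyclotomic polynomial. Then for every n ≥ 1 the quantum number factors as [n] = ∏ ψ_k in ℤ[δ], the product ranging over all divisors k of 2n with k ≥ 3. -/
/-
With `δ = q + q⁻¹` one has `(q - q⁻¹) [n](δ) = qⁿ - q⁻ⁿ`, i.e.
`(q² - 1) qⁿ⁻¹ [n](δ) = q²ⁿ - 1`. On the other side
`q²ⁿ - 1 = ∏_{k ∣ 2n} Φ_k(q) = (q - 1)(q + 1) ∏_{k ≥ 3} q^{φ(k)/2} ψ_k(δ)`, and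
`∑_{k ∣ 2n, k ≥ 3} φ(k)/2 = (2n - 2)/2 = n - 1`. Cancelling `(q² - 1) qⁿ⁻¹` gives
`[n](δ) = ∏ ψ_k(δ)`, and `q + q⁻¹` is transcendental, being a non-constant rational function, so
evaluation at it is injective on `ℤ[δ]`.
-/

open Polynomial

open Finset

-- The `ℤ`-algebra structure is a parameter because `RatFunc ℚ` carries its own instance, which
-- is not reducibly defeq to `Ring.toIntAlgebra`.
theorem aeval_add_qn_mul_sub {A : Type*} [CommRing A] [Algebra ℤ A] {u v : A}
    (huv : u * v = 1) :
    ∀ n : ℕ, aeval (u + v) (qn n) * (u - v) = u ^ n - v ^ n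
  | 0 => by simp [qn]
  | 1 => by simp [qn]
  | n + 2 => by
    have h₀ := aeval_add_qn_mul_sub huv n
    have h₁ := aeval_add_qn_mul_sub huv (n + 1)
    simp only [qn, map_sub, map_mul, aeval_X]
    linear_combination (u + v) * h₁ - h₀ + (u ^ n - v ^ n) * huv

theorem aeval_add_inv_qn_mul {K : Type*} [Field K] [Algebra ℤ K] {u : K} (hu : u ≠ 0) {n : ℕ}
    (hn : n ≠ 0) :
    aeval (u + u⁻¹) (qn n) * ((u ^ 2 - 1) * u ^ (n - 1)) = u ^ (2 * n) - 1 := by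
  have h := aeval_add_qn_mul_sub (mul_inv_cancel₀ hu) n
  generalize aeval (u + u⁻¹) (qn n) = q at h ⊢
  obtain ⟨m, rfl⟩ := Nat.exists_eq_add_one_of_ne_zero hn
  have hinv : u * u⁻¹ = 1 := mul_inv_cancel₀ hu
  have hinv_pow : u⁻¹ ^ (m + 1) * u ^ (m + 1) = 1 := by
    rw [← mul_pow, inv_mul_cancel₀ hu, one_pow]
  rw [Nat.add_sub_cancel]
  linear_combination u ^ (m + 1) * h + q * u ^ m * hinv - hinv_pow

theorem RatFunc.X_add_inv_ne_C {K : Type*} [Field K] (c : K) :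
    (RatFunc.X + RatFunc.X⁻¹ : RatFunc K) ≠ RatFunc.C c := by
  intro h
  have hp : aeval (RatFunc.X : RatFunc K)
      (Polynomial.X ^ 2 - Polynomial.C c * Polynomial.X + 1) = 0 := by
    have hX : (RatFunc.X : RatFunc K) ≠ 0 := RatFunc.X_ne_zero
    simp only [map_add, map_sub, map_mul, map_pow, aeval_X, aeval_C, map_one,
      RatFunc.algebraMap_eq_C]
    rw [← h]
    field_simp
    ring
  have := congrArg (coeff · 2) (transcendental_iff.mp RatFunc.transcendental_X _ hp)
  simp [coeff_one] at this

theorem RatFunc.transcendental_X_add_inv {K : Type*} [Field K] :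
    Transcendental K (RatFunc.X + RatFunc.X⁻¹ : RatFunc K) :=
  RatFunc.transcendental_of_ne_C _ fun ⟨c, hc⟩ ↦ RatFunc.X_add_inv_ne_C c hc

theorem RatFunc.aeval_X_add_inv_int_injective {K : Type*} [Field K] [CharZero K] :
    Function.Injective (aeval (RatFunc.X + RatFunc.X⁻¹ : RatFunc K) : ℤ[X] →ₐ[ℤ] RatFunc K) :=
  transcendental_iff_injective.mp
    (RatFunc.transcendental_X_add_inv.restrictScalars (algebraMap ℤ K).injective_int)

@[to_additive Nat.sum_divisors_two_mul]
theorem Nat.prod_divisors_two_mul {M : Type*} [CommMonoid M] (f : ℕ → M) {n : ℕ} (hn : n ≠ 0) :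
    ∏ k ∈ (2 * n).divisors, f k = f 1 * f 2 * ∏ k ∈ (2 * n).divisors.filter (3 ≤ ·), f k := by
  have hsmall : (2 * n).divisors.filter (¬3 ≤ ·) = {1, 2} := by
    ext k
    simp only [mem_filter, Nat.mem_divisors, mem_insert, mem_singleton]
    constructor
    · rintro ⟨⟨hk, -⟩, hk3⟩
      have := Nat.pos_of_dvd_of_pos hk (by omega)
      omega
    · rintro (rfl | rfl) <;> simp [hn]
  rw [← prod_filter_not_mul_prod_filter _ (3 ≤ ·), hsmall, prod_pair (by norm_num)]

theorem Nat.sum_totient_div_two_filter_three_le {n : ℕ} (hn : n ≠ 0) :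
    ∑ k ∈ (2 * n).divisors.filter (3 ≤ ·), Nat.totient k / 2 = n - 1 := by
  have htot := Nat.sum_divisors_two_mul Nat.totient hn
  rw [Nat.sum_totient, Nat.totient_one, Nat.totient_two] at htot
  have hhalf : ∑ k ∈ (2 * n).divisors.filter (3 ≤ ·), Nat.totient k / 2 * 2 =
      ∑ k ∈ (2 * n).divisors.filter (3 ≤ ·), Nat.totient k :=
    sum_congr rfl fun k hk ↦
      Nat.div_mul_cancel (Nat.totient_even (mem_filter.mp hk).2).two_dvd
  rw [← sum_mul] at hhalf
  omega

/-- If for each `k ≥ 3` the polynomial `ψ k ∈ ℤ[X]` satisfies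
`Φ_k(q) = q^(φ(k)/2) · ψ_k(q + q⁻¹)` in `ℚ(q)`, then for every `n ≥ 1` the quantum number
factors as `[n] = ∏_{k ∣ 2n, k ≥ 3} ψ_k` in `ℤ[δ]`. -/
theorem qn_eq_prod_psi (ψ : ℕ → Polynomial ℤ)
    (hψ : ∀ k : ℕ, 3 ≤ k →
      aeval (RatFunc.X : RatFunc ℚ) (Polynomial.cyclotomic k ℤ) =
        (RatFunc.X : RatFunc ℚ) ^ (Nat.totient k / 2) *
          aeval ((RatFunc.X : RatFunc ℚ) + (RatFunc.X : RatFunc ℚ)⁻¹) (ψ k))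
    (n : ℕ) (hn : 1 ≤ n) :
    qn n = ∏ k ∈ (Nat.divisors (2 * n)).filter (fun k => 3 ≤ k), ψ k := by
  set u : RatFunc ℚ := RatFunc.X
  have hn₀ : n ≠ 0 := by omega
  have hcyc : u ^ (2 * n) - 1 = aeval (u + u⁻¹) (∏ k ∈ (2 * n).divisors.filter (3 ≤ ·), ψ k) *
      ((u ^ 2 - 1) * u ^ (n - 1)) := calc
    u ^ (2 * n) - 1 = ∏ k ∈ (2 * n).divisors, aeval u (cyclotomic k ℤ) := by
      rw [← map_prod, prod_cyclotomic_eq_X_pow_sub_one (by omega)]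
      simp
    _ = (u - 1) * (u + 1) *
        ∏ k ∈ (2 * n).divisors.filter (3 ≤ ·), u ^ (Nat.totient k / 2) * aeval (u + u⁻¹) (ψ k) := by
      rw [Nat.prod_divisors_two_mul _ hn₀, prod_congr rfl fun k hk ↦ hψ k (mem_filter.mp hk).2]
      simp
    _ = _ := by
      rw [prod_mul_distrib, prod_pow_eq_pow_sum, Nat.sum_totient_div_two_filter_three_le hn₀,
        map_prod]
      ring
  have hu₂ : u ^ 2 - 1 ≠ 0 := by
    simpa [u, RatFunc.algebraMap_X] using
      RatFunc.algebraMap_ne_zero (X_pow_sub_C_ne_zero two_pos (1 : ℚ))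
  apply RatFunc.aeval_X_add_inv_int_injective (K := ℚ)
  exact mul_right_cancel₀ (mul_ne_zero hu₂ (pow_ne_zero _ RatFunc.X_ne_zero))
    ((aeval_add_inv_qn_mul RatFunc.X_ne_zero hn₀).trans hcyc)
end

section
/- Let ℓ ≥ 3 be an odd integer, and suppose ψ_ℓ, ψ_{2ℓ} ∈ ℤ[X] satisfy Φ_ℓ(q) = q^{φ(ℓ)/2}·ψ_ℓ(q + q⁻¹) and Φ_{2ℓ}(q) = q^{φ(2ℓ)/2}·ψ_{2ℓ}(q + q⁻¹) in the field of rational functions ℚ(q), where Φ_k is the k-th cyclotomic polynomial. Then the reductions of ψ_ℓ and ψ_{2ℓ} modulo 2 are equal in (ℤ/2ℤ)[X]. -/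
/-!
For `N ≥ deg ψ`, `X^N · ψ(X + X⁻¹) = ∑ ψᵢ (X² + 1)ⁱ X^(N-i)` is a polynomial whose coefficient of
`X^(N - deg ψ)` is the leading coefficient of `ψ`, so it determines `ψ` over any commutative ring.
Since `X` is transcendental, the hypotheses become identities `Φ · X^N = X^(φ/2) · X^N ψ(X + X⁻¹)`
in `ℤ[X]`, which survive reduction mod 2. There `φ(2ℓ) = φ(ℓ)` and, by Frobenius,
`Φ_{2ℓ} = Φ_ℓ^(2-1) = Φ_ℓ` for odd `ℓ`, so the cleared forms of `ψ_ℓ` and `ψ_{2ℓ}` agree mod 2.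
-/

open Polynomial

namespace Polynomial

variable {R : Type*} [CommRing R]

/-- `X^N · p(X + X⁻¹)` when `natDegree p ≤ N`; coefficients of `p` beyond `N` are dropped. -/
noncomputable def clearedCompAddInv (N : ℕ) (p : R[X]) : R[X] :=
  ∑ i ∈ Finset.range (N + 1), C (p.coeff i) * (X ^ 2 + 1) ^ i * X ^ (N - i)

lemma map_clearedCompAddInv {S : Type*} [CommRing S] (f : R →+* S) (N : ℕ) (p : R[X]) :
    (clearedCompAddInv N p).map f = clearedCompAddInv N (p.map f) := by
  simp [clearedCompAddInv, Polynomial.map_sum, coeff_map]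

lemma clearedCompAddInv_sub (N : ℕ) (p q : R[X]) :
    clearedCompAddInv N (p - q) = clearedCompAddInv N p - clearedCompAddInv N q := by
  simp [clearedCompAddInv, sub_mul, Finset.sum_sub_distrib]

lemma coeff_clearedCompAddInv_sub_natDegree {N : ℕ} {p : R[X]} (hp : p.natDegree ≤ N) :
    (clearedCompAddInv N p).coeff (N - p.natDegree) = p.leadingCoeff := by
  rw [clearedCompAddInv, finsetSum_coeff,
    Finset.sum_eq_single_of_mem p.natDegree (Finset.mem_range.mpr (Nat.lt_succ_of_le hp))]
  · rw [mul_assoc, coeff_C_mul, coeff_mul_X_pow', if_pos le_rfl, Nat.sub_self,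
      coeff_zero_eq_eval_zero]
    simp [coeff_natDegree]
  · intro i _ hi
    rw [mul_assoc, coeff_C_mul, coeff_mul_X_pow']
    rcases lt_or_gt_of_ne hi with hlt | hgt
    · rw [if_neg (by omega), mul_zero]
    · rw [coeff_eq_zero_of_natDegree_lt hgt, zero_mul]

lemma eq_zero_of_clearedCompAddInv_eq_zero {N : ℕ} {p : R[X]} (hp : p.natDegree ≤ N)
    (h : clearedCompAddInv N p = 0) : p = 0 := by
  rw [← leadingCoeff_eq_zero, ← coeff_clearedCompAddInv_sub_natDegree hp, h, coeff_zero]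

lemma eq_of_clearedCompAddInv_eq {N : ℕ} {p q : R[X]} (hp : p.natDegree ≤ N)
    (hq : q.natDegree ≤ N) (h : clearedCompAddInv N p = clearedCompAddInv N q) : p = q :=
  sub_eq_zero.mp <| eq_zero_of_clearedCompAddInv_eq_zero
    ((natDegree_sub_le p q).trans (max_le hp hq)) (by rw [clearedCompAddInv_sub, h, sub_self])

lemma aeval_clearedCompAddInv {K : Type*} [Field K] [Algebra R K] {x : K} (hx : x ≠ 0)
    {N : ℕ} {p : R[X]} (hp : p.natDegree ≤ N) :
    aeval x (clearedCompAddInv N p) = x ^ N * aeval (x + x⁻¹) p := by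
  rw [aeval_eq_sum_range' (Nat.lt_succ_of_le hp), clearedCompAddInv, map_sum, Finset.mul_sum]
  refine Finset.sum_congr rfl fun i hi => ?_
  have hsq : x ^ 2 + 1 = (x + x⁻¹) * x := by field_simp
  obtain ⟨k, rfl⟩ := Nat.exists_eq_add_of_le (Nat.lt_succ_iff.mp (Finset.mem_range.mp hi))
  simp only [map_mul, map_pow, map_add, map_one, aeval_X, aeval_C, Algebra.smul_def,
    Nat.add_sub_cancel_left]
  rw [hsq, mul_pow]
  ring

lemma mul_X_pow_eq_X_pow_mul_clearedCompAddInv {K : Type*} [Field K] [Algebra R K] [Nontrivial R]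
    {x : K} (hx : Transcendental R x) {f ψ : R[X]} {m N : ℕ} (hN : ψ.natDegree ≤ N)
    (h : aeval x f = x ^ m * aeval (x + x⁻¹) ψ) :
    f * X ^ N = X ^ m * clearedCompAddInv N ψ := by
  have hx0 : x ≠ 0 := fun h0 => hx (h0 ▸ isAlgebraic_zero)
  apply transcendental_iff_injective.mp hx
  simp only [map_mul, map_pow, aeval_X, aeval_clearedCompAddInv hx0 hN, h]
  ring

lemma cyclotomic_two_mul_of_odd (R : Type*) [Ring R] [CharP R 2] {n : ℕ} (hn : Odd n) :
    cyclotomic (2 * n) R = cyclotomic n R := by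
  have : Fact (Nat.Prime 2) := ⟨Nat.prime_two⟩
  simpa [mul_comm] using
    cyclotomic_mul_prime_eq_pow_of_not_dvd R (p := 2) hn.not_two_dvd_nat

end Polynomial

lemma RatFunc.transcendental_int_X : Transcendental ℤ (RatFunc.X : RatFunc ℚ) := by
  have aeval_eq : ∀ r : ℤ[X], aeval (RatFunc.X : RatFunc ℚ) r =
      algebraMap ℚ[X] (RatFunc ℚ) (r.map (Int.castRingHom ℚ)) := fun r => by
    rw [← RatFunc.aeval_X_left_eq_algebraMap]
    simp only [aeval_def, eval₂_map]
    congr 1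
  refine transcendental_iff_injective.mpr fun p q h => ?_
  simp only [aeval_eq] at h
  exact Polynomial.map_injective _ Int.cast_injective (IsFractionRing.injective ℚ[X] (RatFunc ℚ) h)

theorem psi_eq_psi_two_mul_mod_two_general (ℓ : ℕ) (hodd : Odd ℓ)
    (ψℓ ψ2ℓ : Polynomial ℤ)
    (hψℓ : aeval (RatFunc.X : RatFunc ℚ) (Polynomial.cyclotomic ℓ ℤ) =
        (RatFunc.X : RatFunc ℚ) ^ (Nat.totient ℓ / 2) *
          aeval ((RatFunc.X : RatFunc ℚ) + (RatFunc.X : RatFunc ℚ)⁻¹) ψℓ)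
    (hψ2ℓ : aeval (RatFunc.X : RatFunc ℚ) (Polynomial.cyclotomic (2 * ℓ) ℤ) =
        (RatFunc.X : RatFunc ℚ) ^ (Nat.totient (2 * ℓ) / 2) *
          aeval ((RatFunc.X : RatFunc ℚ) + (RatFunc.X : RatFunc ℚ)⁻¹) ψ2ℓ) :
    ψℓ.map (Int.castRingHom (ZMod 2)) = ψ2ℓ.map (Int.castRingHom (ZMod 2)) := by
  have htot : Nat.totient (2 * ℓ) = Nat.totient ℓ := by
    rw [Nat.totient_mul (Nat.coprime_two_left.mpr hodd), Nat.totient_two, one_mul]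
  set N := max ψℓ.natDegree ψ2ℓ.natDegree
  have hNℓ : ψℓ.natDegree ≤ N := le_max_left _ _
  have hN2ℓ : ψ2ℓ.natDegree ≤ N := le_max_right _ _
  have e1 := congrArg (Polynomial.map (Int.castRingHom (ZMod 2)))
    (mul_X_pow_eq_X_pow_mul_clearedCompAddInv RatFunc.transcendental_int_X hNℓ hψℓ)
  have e2 := congrArg (Polynomial.map (Int.castRingHom (ZMod 2)))
    (mul_X_pow_eq_X_pow_mul_clearedCompAddInv RatFunc.transcendental_int_X hN2ℓ hψ2ℓ)
  simp only [Polynomial.map_mul, Polynomial.map_pow, Polynomial.map_X, map_cyclotomic_int,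
    map_clearedCompAddInv] at e1 e2
  rw [cyclotomic_two_mul_of_odd _ hodd, htot, e1] at e2
  exact eq_of_clearedCompAddInv_eq (natDegree_map_le.trans hNℓ) (natDegree_map_le.trans hN2ℓ)
    ((isRegular_X_pow _).left.eq_iff.mp e2)

/-- If `ℓ ≥ 3` is odd and `ψℓ, ψ2ℓ ∈ ℤ[X]` satisfy `Φ_ℓ(q) = q^(φ(ℓ)/2)·ψℓ(q + q⁻¹)` and
`Φ_{2ℓ}(q) = q^(φ(2ℓ)/2)·ψ2ℓ(q + q⁻¹)` in `ℚ(q)`, then `ψℓ ≡ ψ2ℓ (mod 2)`. -/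
theorem psi_eq_psi_two_mul_mod_two (ℓ : ℕ) (hℓ : 3 ≤ ℓ) (hodd : Odd ℓ)
    (ψℓ ψ2ℓ : Polynomial ℤ)
    (hψℓ : aeval (RatFunc.X : RatFunc ℚ) (Polynomial.cyclotomic ℓ ℤ) =
        (RatFunc.X : RatFunc ℚ) ^ (Nat.totient ℓ / 2) *
          aeval ((RatFunc.X : RatFunc ℚ) + (RatFunc.X : RatFunc ℚ)⁻¹) ψℓ)
    (hψ2ℓ : aeval (RatFunc.X : RatFunc ℚ) (Polynomial.cyclotomic (2 * ℓ) ℤ) =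
        (RatFunc.X : RatFunc ℚ) ^ (Nat.totient (2 * ℓ) / 2) *
          aeval ((RatFunc.X : RatFunc ℚ) + (RatFunc.X : RatFunc ℚ)⁻¹) ψ2ℓ) :
    ψℓ.map (Int.castRingHom (ZMod 2)) = ψ2ℓ.map (Int.castRingHom (ZMod 2)) :=
  psi_eq_psi_two_mul_mod_two_general ℓ hodd ψℓ ψ2ℓ hψℓ hψ2ℓ
end

section
/- Let p be an odd prime and ℓ ≥ 2 an integer not divisible by p. Then the image of the quantum number [ℓ] in (ℤ/pℤ)[X] is squarefree; in particular, every irreducible factor of [ℓ] modulo p occurs with multiplicity exactly 1. -/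
open Polynomial

lemma qn_add_two (n : ℕ) : qn (n + 2) = X * qn (n + 1) - qn n := rfl

/-- Pell-type identity: `[n+1]² − [n+2]·[n] = 1`. -/
lemma qn_pell (n : ℕ) : qn (n + 1) * qn (n + 1) - qn (n + 2) * qn n = 1 := by
  induction n with
  | zero => simp [qn]
  | succ n ih =>
    rw [qn_add_two (n + 1), qn_add_two n] at *
    ring_nf at ih ⊢
    linear_combination ih

/-- Derivative identity: `(X²−4)·[n+1]′ = (n+1)([n+2] − [n]) − X·[n+1]`. -/
lemma qn_deriv (n : ℕ) :
    (X ^ 2 - 4) * derivative (qn (n + 1)) =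
      ((n : Polynomial ℤ) + 1) * (qn (n + 2) - qn n) - X * qn (n + 1) := by
  induction n using Nat.twoStepInduction with
  | zero => simp [qn]
  | one => simp [qn_add_two, qn]; ring
  | more n ih1 ih2 =>
    have h3 : qn (n + 3) = X * qn (n + 2) - qn (n + 1) := qn_add_two (n + 1)
    have h4 : qn (n + 4) = X * qn (n + 3) - qn (n + 2) := qn_add_two (n + 2)
    have hd : derivative (qn (n + 3)) =
        qn (n + 2) + X * derivative (qn (n + 2)) - derivative (qn (n + 1)) := by
      rw [h3]; simp only [derivative_sub, derivative_mul, derivative_X, one_mul]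
    simp only [show n + 2 + 2 = n + 4 from rfl, show n + 2 + 1 = n + 3 from rfl,
      show n + 1 + 2 = n + 3 from rfl, show n + 1 + 1 = n + 2 from rfl] at ih2 ⊢
    rw [hd, h4, h3]
    rw [h3] at ih2
    push_cast at ih2 ⊢
    linear_combination (X : Polynomial ℤ) * ih2 - ih1 +
      ((n : Polynomial ℤ) + 1) * qn_add_two n

/-- For an odd prime `p` and `ℓ ≥ 2` not divisible by `p`, the reduction of `[ℓ]` modulo `p`
is squarefree. -/
theorem qn_squarefree_mod_odd_prime (p : ℕ) (hp : p.Prime) (hodd : Odd p)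
    (ℓ : ℕ) (hℓ : 2 ≤ ℓ) (hpl : ¬ p ∣ ℓ) :
    Squarefree ((qn ℓ).map (Int.castRingHom (ZMod p))) := by
  haveI : Fact p.Prime := ⟨hp⟩
  obtain ⟨n, rfl⟩ : ∃ n, ℓ = n + 1 := ⟨ℓ - 1, by omega⟩
  set φ := Int.castRingHom (ZMod p)
  set f := (qn (n + 1)).map φ with hf
  set F0 := (qn n).map φ
  set F2 := (qn (n + 2)).map φ
  -- mapped identities
  have pell : f * f - F2 * F0 = 1 := by
    have := congrArg (Polynomial.map φ) (qn_pell n)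
    simpa [Polynomial.map_mul, Polynomial.map_sub, f, F0, F2] using this
  have rec2 : F2 = X * f - F0 := by
    have := congrArg (Polynomial.map φ) (qn_add_two n)
    simpa [Polynomial.map_mul, Polynomial.map_sub, f, F0, F2] using this
  have derid : (X ^ 2 - 4) * derivative f =
      ((n : Polynomial (ZMod p)) + 1) * (F2 - F0) - X * f := by
    have := congrArg (Polynomial.map φ) (qn_deriv n)
    simpa [Polynomial.map_mul, Polynomial.map_sub, Polynomial.map_add, Polynomial.map_pow,
      Polynomial.map_ofNat, derivative_map, f, F0, F2] using this
  -- units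
  have hl : ((n : ZMod p) + 1) ≠ 0 := by
    have : ((n + 1 : ℕ) : ZMod p) ≠ 0 := by
      rw [Ne, ZMod.natCast_eq_zero_iff]; exact hpl
    simpa using this
  have h2 : (2 : ZMod p) ≠ 0 := by
    have : ((2 : ℕ) : ZMod p) ≠ 0 := by
      rw [Ne, ZMod.natCast_eq_zero_iff]
      intro h
      have := (Nat.prime_dvd_prime_iff_eq hp Nat.prime_two).mp h
      rcases hodd with ⟨k, hk⟩
      omega
    simpa using this
  intro x hx
  have hxf : x ∣ f := (dvd_mul_right x x).trans hx
  have hxd : x ∣ derivative f := by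
    obtain ⟨h, hh⟩ := hx
    rw [hh]
    rw [derivative_mul, derivative_mul]
    exact dvd_add (dvd_mul_of_dvd_left (dvd_add (dvd_mul_left x _)
      (dvd_mul_right x _)) _) (dvd_mul_of_dvd_left (dvd_mul_right x x) _)
  -- x ∣ (n+1) * (F2 - F0)
  have key : x ∣ ((n : Polynomial (ZMod p)) + 1) * (F2 - F0) := by
    have : ((n : Polynomial (ZMod p)) + 1) * (F2 - F0) =
        (X ^ 2 - 4) * derivative f + X * f := by rw [derid]; ring
    rw [this]
    exact dvd_add (Dvd.dvd.mul_left hxd _) (Dvd.dvd.mul_left hxf _)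
  have hunit : IsUnit ((n : Polynomial (ZMod p)) + 1) := by
    have h := hl.isUnit.map (C : ZMod p →+* Polynomial (ZMod p))
    rwa [map_add, map_one, C_eq_natCast] at h
  have hdiff : x ∣ F2 - F0 := hunit.dvd_mul_left.mp key
  have hxF0 : x ∣ F0 := by
    have h2' : x ∣ (2 : Polynomial (ZMod p)) * F0 := by
      have : (2 : Polynomial (ZMod p)) * F0 = X * f - (F2 - F0) := by rw [rec2]; ring
      rw [this]
      exact dvd_sub (Dvd.dvd.mul_left hxf _) hdiff
    have hu2 : IsUnit (2 : Polynomial (ZMod p)) := by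
      have h := h2.isUnit.map (C : ZMod p →+* Polynomial (ZMod p))
      rwa [map_ofNat] at h
    exact hu2.dvd_mul_left.mp h2'
  have : x ∣ 1 := by
    rw [← pell]
    exact dvd_sub (hxf.mul_right _) (hxF0.mul_left _)
  exact isUnit_of_dvd_one this
end

section
/- Let ℓ ≥ 3 be an odd integer. Then there exists a squarefree polynomial g ∈ (ℤ/2ℤ)[X] such that the image of the quantum number [ℓ] in (ℤ/2ℤ)[X] equals g²; in particular, every irreducible factor of [ℓ] modulo 2 occurs with multiplicity exactly 2. -/
open Polynomial

/-- The reduction of `qn` modulo 2. -/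
noncomputable def qn2 (n : ℕ) : Polynomial (ZMod 2) :=
  (qn n).map (Int.castRingHom (ZMod 2))

lemma two_eq_zero' : (2 : Polynomial (ZMod 2)) = 0 := CharTwo.two_eq_zero

lemma qn2_zero : qn2 0 = 0 := by simp [qn2, qn]

lemma qn2_one : qn2 1 = 1 := by simp [qn2, qn]

lemma qn2_rec (n : ℕ) : qn2 (n + 2) = X * qn2 (n + 1) + qn2 n := by
  have h : qn (n + 2) = X * qn (n + 1) - qn n := rfl
  unfold qn2
  rw [h, Polynomial.map_sub, Polynomial.map_mul, Polynomial.map_X]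
  linear_combination (-(Polynomial.map (Int.castRingHom (ZMod 2)) (qn n))) * two_eq_zero'

/-- The double formulas mod 2: `[2m] = X·[m]²` and `[2m+1] = ([m+1]+[m])²`. -/
lemma qn2_double (m : ℕ) :
    qn2 (2 * m) = X * (qn2 m) ^ 2 ∧ qn2 (2 * m + 1) = (qn2 (m + 1) + qn2 m) ^ 2 := by
  induction m with
  | zero => constructor <;> simp [qn2_zero, qn2_one]
  | succ m ih =>
    obtain ⟨h1, h2⟩ := ih
    have h3' : qn2 (2 * m + 2) = X * (qn2 (m + 1)) ^ 2 := by
      rw [qn2_rec (2 * m), h1, h2]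
      linear_combination (X * qn2 (m + 1) * qn2 m + X * (qn2 m) ^ 2) * two_eq_zero'
    have h3 : qn2 (2 * (m + 1)) = X * (qn2 (m + 1)) ^ 2 := by
      rw [show 2 * (m + 1) = 2 * m + 2 by ring]; exact h3'
    have h4 : qn2 (2 * (m + 1) + 1) = (qn2 (m + 2) + qn2 (m + 1)) ^ 2 := by
      rw [show 2 * (m + 1) + 1 = (2 * m + 1) + 2 by ring, qn2_rec (2 * m + 1),
        show 2 * m + 1 + 1 = 2 * m + 2 by omega, h3', h2, qn2_rec m]
      linear_combination (-(X * qn2 (m + 1) * qn2 m) - X * (qn2 (m + 1)) ^ 2) * two_eq_zero'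
    exact ⟨h3, h4⟩

/-- The Wronskian-type identity `[m]·[m+2] = [m+1]² + 1` mod 2. -/
lemma qn2_wronskian (m : ℕ) : qn2 m * qn2 (m + 2) = (qn2 (m + 1)) ^ 2 + 1 := by
  induction m with
  | zero =>
    have h : qn2 2 = X * qn2 1 + qn2 0 := qn2_rec 0
    show qn2 0 * qn2 2 = qn2 1 ^ 2 + 1
    rw [h, qn2_zero, qn2_one]
    linear_combination (-1 : Polynomial (ZMod 2)) * two_eq_zero'
  | succ m ih =>
    have e1 : qn2 (m + 1 + 2) = X * qn2 (m + 1 + 1) + qn2 (m + 1) := qn2_rec (m + 1)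
    have e2 : qn2 (m + 1 + 1) = X * qn2 (m + 1) + qn2 m := qn2_rec m
    have e3 : qn2 (m + 2) = X * qn2 (m + 1) + qn2 m := qn2_rec m
    rw [e3] at ih
    rw [e1, e2]
    linear_combination (-1 : Polynomial (ZMod 2)) * ih
      + (-1 : Polynomial (ZMod 2)) * two_eq_zero'

lemma deriv_sq (p : Polynomial (ZMod 2)) : derivative (p ^ 2) = 0 := by
  rw [derivative_pow]; simp [CharTwo.two_eq_zero]

/-- `g m = [m+1] + [m]` mod 2 is separable. -/
lemma g_separable (m : ℕ) : (qn2 (m + 1) + qn2 m).Separable := by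
  rcases Nat.even_or_odd m with ⟨j, hj⟩ | ⟨j, hj⟩
  · -- m = 2j : g = ([j+1]+[j])² + X·[j]², derivative = [j]²
    have h0 : qn2 m = X * (qn2 j) ^ 2 := by
      rw [hj, show j + j = 2 * j by ring]; exact (qn2_double j).1
    have h1 : qn2 (m + 1) = (qn2 (j + 1) + qn2 j) ^ 2 := by
      rw [hj, show j + j + 1 = 2 * j + 1 by ring]; exact (qn2_double j).2
    rw [h0, h1]
    rw [Polynomial.separable_def]
    have hd : derivative ((qn2 (j + 1) + qn2 j) ^ 2 + X * (qn2 j) ^ 2) = (qn2 j) ^ 2 := by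
      rw [derivative_add, deriv_sq, derivative_mul, deriv_sq, derivative_X]
      ring
    rw [hd]
    have hcop : IsCoprime ((qn2 (j + 1) + qn2 j) ^ 2 + X * (qn2 j) ^ 2) (qn2 j) := by
      refine ⟨1, -(qn2 (j + 2)) - (1 + X) * qn2 j, ?_⟩
      have hk := qn2_wronskian j
      linear_combination (-1 : Polynomial (ZMod 2)) * hk
        + (qn2 (j + 1) * qn2 j - 1) * two_eq_zero'
    exact hcop.pow_right
  · -- m = 2j+1 : g = X·[j+1]² + ([j+1]+[j])², derivative = [j+1]²
    have h1 : qn2 m = (qn2 (j + 1) + qn2 j) ^ 2 := by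
      rw [hj]; exact (qn2_double j).2
    have h2 : qn2 (m + 1) = X * (qn2 (j + 1)) ^ 2 := by
      rw [hj, show 2 * j + 1 + 1 = 2 * (j + 1) by ring]; exact (qn2_double (j + 1)).1
    rw [h1, h2]
    rw [Polynomial.separable_def]
    have hd : derivative (X * (qn2 (j + 1)) ^ 2 + (qn2 (j + 1) + qn2 j) ^ 2)
        = (qn2 (j + 1)) ^ 2 := by
      rw [derivative_add, deriv_sq, derivative_mul, deriv_sq, derivative_X]
      ring
    rw [hd]
    have hcop : IsCoprime (X * (qn2 (j + 1)) ^ 2 + (qn2 (j + 1) + qn2 j) ^ 2)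
        (qn2 (j + 1)) := by
      refine ⟨1, -(X * qn2 (j + 1)) - qn2 (j + 1) - qn2 (j + 3) - X ^ 2 * qn2 (j + 1), ?_⟩
      have hk := qn2_wronskian (j + 1)
      have hr : qn2 (j + 2) = X * qn2 (j + 1) + qn2 j := qn2_rec j
      rw [hr] at hk
      have hr3 : qn2 (j + 3) = X * (X * qn2 (j + 1) + qn2 j) + qn2 (j + 1) := by
        have := qn2_rec (j + 1)
        rw [hr] at this
        exact this
      rw [hr3]
      have hk' : qn2 (j + 1) * qn2 (j + 1 + 2) = (X * qn2 (j + 1) + qn2 j) ^ 2 + 1 := hk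
      have hk'' : qn2 (j + 1) * (X * (X * qn2 (j + 1) + qn2 j) + qn2 (j + 1))
          = (X * qn2 (j + 1) + qn2 j) ^ 2 + 1 := by
        have hr3' : qn2 (j + 1 + 2) = X * (X * qn2 (j + 1) + qn2 j) + qn2 (j + 1) := hr3
        rw [hr3'] at hk'
        exact hk'
      linear_combination (-1 : Polynomial (ZMod 2)) * hk''
        + (qn2 (j + 1) * qn2 j - X * qn2 (j + 1) * qn2 j
          - X ^ 2 * (qn2 (j + 1)) ^ 2 - 1) * two_eq_zero'
    exact hcop.pow_right

/-- For odd `ℓ ≥ 3`, the reduction of `[ℓ]` modulo `2` is the square of a squarefree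
polynomial. -/
theorem qn_mod_two_eq_sq (ℓ : ℕ) (hℓ : 3 ≤ ℓ) (hodd : Odd ℓ) :
    ∃ g : Polynomial (ZMod 2), Squarefree g ∧
      (qn ℓ).map (Int.castRingHom (ZMod 2)) = g ^ 2 := by
  obtain ⟨m, hm⟩ := hodd
  refine ⟨qn2 (m + 1) + qn2 m, (g_separable m).squarefree, ?_⟩
  show qn2 ℓ = _
  rw [hm]
  exact (qn2_double m).2
end

section
/- Let K be a field of prime characteristic p and δ ∈ K. Suppose ℓ ≥ 1 is the smallest positive integer with [ℓ]_δ = 0 in K (i.e. [ℓ]_δ = 0 and [n]_δ ≠ 0 for all 1 ≤ n < ℓ). If p divides ℓ, then ℓ = p. -/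
open Polynomial

/-- If `K` is a field of prime characteristic `p`, `δ ∈ K`, and `ℓ ≥ 1` is the smallest
positive integer with `[ℓ]_δ = 0`, then `p ∣ ℓ` implies `ℓ = p`. -/
theorem ell_eq_p_of_p_dvd (K : Type*) [Field K] (p : ℕ) (hp : p.Prime) [CharP K p]
    (δ : K) (ℓ : ℕ) (hℓ : 1 ≤ ℓ) (hzero : aeval δ (qn ℓ) = 0)
    (hmin : ∀ n : ℕ, 1 ≤ n → n < ℓ → aeval δ (qn n) ≠ 0)
    (hdvd : p ∣ ℓ) : ℓ = p := by
  haveI : Fact p.Prime := ⟨hp⟩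
  set Kb := AlgebraicClosure K with hKb
  set ι := algebraMap K Kb with hι
  have hinj : Function.Injective ι := (algebraMap K Kb).injective
  have hdeg : (X ^ 2 - C (ι δ) * X + 1 : Kb[X]).degree = 2 := by compute_degree!
  obtain ⟨q, hq⟩ := IsAlgClosed.exists_root (X ^ 2 - C (ι δ) * X + 1 : Kb[X])
    (by rw [hdeg]; decide)
  simp only [IsRoot, eval_add, eval_sub, eval_mul, eval_pow, eval_X, eval_C, eval_one] at hq
  set q' : Kb := ι δ - q with hq'def
  have hqq : q * q' = 1 := by rw [hq'def]; linear_combination -hq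
  have hsum : q + q' = ι δ := by rw [hq'def]; ring
  set s : ℕ → Kb := fun n => ι (aeval δ (qn n)) with hs
  have hs0 : s 0 = 0 := by simp [hs, qn]
  have hs1 : s 1 = 1 := by simp [hs, qn]
  have hsrec : ∀ n, s (n + 2) = (q + q') * s (n + 1) - s n := by
    intro n
    simp only [hs, qn, map_sub, map_mul, aeval_X, hsum]
  by_cases hd : q' = q
  · -- degenerate case: [n]_δ = n q^(n+1), so [p]_δ = 0
    have hqq2 : q * q = 1 := hd ▸ hqq
    have key2 : ∀ n, s n = (n : Kb) * q ^ (n + 1) := by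
      intro n
      induction n using Nat.twoStepInduction with
      | zero => simp [hs0]
      | one => simp [hs1]; linear_combination -hqq2
      | more n ih1 ih2 =>
        rw [hsrec]
        push_cast at ih1 ih2 ⊢
        linear_combination (q + q') * ih2 - ih1 + ((n : Kb) + 1) * q ^ (n + 2) * hd
          + (n : Kb) * q ^ (n + 1) * hqq2
    have hsp : s p = 0 := by
      rw [key2 p, CharP.cast_eq_zero Kb p, zero_mul]
    have hpzero : aeval δ (qn p) = 0 := hinj (by rw [map_zero]; exact hsp)
    have hle : ℓ ≤ p := by
      by_contra h
      exact hmin p hp.one_le (lt_of_not_ge h) hpzero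
    exact le_antisymm hle (Nat.le_of_dvd hℓ hdvd)
  · -- nondegenerate case
    have key : ∀ n, (q - q') * s n = q ^ n - q' ^ n := by
      intro n
      induction n using Nat.twoStepInduction with
      | zero => simp [hs0]
      | one => simp [hs1]
      | more n ih1 ih2 =>
        rw [hsrec]
        linear_combination (q + q') * ih2 - ih1 + (q ^ n - q' ^ n) * hqq
    obtain ⟨k, hk⟩ := hdvd
    have hk1 : 1 ≤ k := by
      rcases Nat.eq_zero_or_pos k with h | h
      · rw [h, mul_zero] at hk; omega
      · exact h
    rcases eq_or_lt_of_le hk1 with h1 | h2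
    · rw [hk, ← h1, mul_one]
    · exfalso
      have hsl : s ℓ = 0 := by simp [hs, hzero]
      have hql : (q ^ k) ^ p = (q' ^ k) ^ p := by
        rw [← pow_mul, ← pow_mul, mul_comm k p, ← hk]
        have := key ℓ
        rw [hsl, mul_zero] at this
        exact sub_eq_zero.mp this.symm
      have hqk : q ^ k = q' ^ k := by
        apply frobenius_inj Kb p
        rw [frobenius_def, frobenius_def]
        exact hql
      have hsk : s k = 0 := by
        have := key k
        rw [hqk, sub_self] at this
        rcases mul_eq_zero.mp this with h | h
        · exact absurd (sub_eq_zero.mp h) (fun hh => hd hh.symm)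
        · exact h
      have hkzero : aeval δ (qn k) = 0 := hinj (by rw [map_zero]; exact hsk)
      have hklt : k < ℓ := by
        rw [hk]
        have h2p := hp.two_le
        nlinarith
      exact hmin k hk1 hklt hkzero
end

section
/- Let p be a prime. For every natural number n, the reduction modulo p of the polynomial ([n] ∘ ([p+1] − [p−1])) ∈ ℤ[δ] (the composition of [n] with [p+1] − [p−1]) equals the p-th power of the reduction modulo p of [n]; that is, in (ℤ/pℤ)[X] one has the identity ([n] mod p) ∘ (([p+1] − [p−1]) mod p) = ([n] mod p)^p. -/
open Polynomial

lemma qn_sub_eq_dickson : ∀ n : ℕ, qn (n + 2) - qn n = dickson 1 (1 : ℤ) (n + 1)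
  | 0 => by simp [qn, dickson]
  | 1 => by
    simp only [qn, dickson, C_1]
    ring
  | n + 2 => by
    have h1 := qn_sub_eq_dickson n
    have h2 := qn_sub_eq_dickson (n + 1)
    have hq : qn (n + 4) = X * qn (n + 3) - qn (n + 2) := rfl
    have hq2 : qn (n + 2) = X * qn (n + 1) - qn n := rfl
    rw [show n + 2 + 1 = n + 1 + 2 from rfl, dickson_add_two, C_1]
    rw [show (n : ℕ) + 2 + 2 = n + 4 from rfl]
    rw [show ((n : ℕ) + 1 + 1) = n + 2 from rfl]
    linear_combination (X : Polynomial ℤ) * h2 - h1 + hq - hq2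

lemma qn_comp_aux (p : ℕ) [Fact p.Prime] :
    ∀ n : ℕ, ((qn n).map (Int.castRingHom (ZMod p))).comp (X ^ p) =
      ((qn n).map (Int.castRingHom (ZMod p))) ^ p
  | 0 => by simp [qn, zero_pow (Fact.out : p.Prime).ne_zero]
  | 1 => by simp [qn]
  | n + 2 => by
    have h1 := qn_comp_aux p n
    have h2 := qn_comp_aux p (n + 1)
    have hq : qn (n + 2) = X * qn (n + 1) - qn n := rfl
    rw [hq]
    rw [Polynomial.map_sub, Polynomial.map_mul, map_X, sub_comp, mul_comp, X_comp, h1, h2]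
    haveI := (ZMod.charP p)
    rw [sub_pow_char, mul_pow]

/-- Freshman's dream for quantum numbers: modulo a prime `p`, the composition
`[n] ∘ ([p+1] − [p−1])` equals `[n]^p`. -/
theorem qn_comp_frobenius_mod (p : ℕ) (hp : p.Prime) (n : ℕ) :
    ((qn n).map (Int.castRingHom (ZMod p))).comp
        ((qn (p + 1) - qn (p - 1)).map (Int.castRingHom (ZMod p))) =
      ((qn n).map (Int.castRingHom (ZMod p))) ^ p := by
  haveI : Fact p.Prime := ⟨hp⟩
  have hS : (qn (p + 1) - qn (p - 1)).map (Int.castRingHom (ZMod p)) = X ^ p := by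
    have hpos := hp.pos
    have h1 : p - 1 + 2 = p + 1 := by omega
    have h2 : p - 1 + 1 = p := by omega
    have := qn_sub_eq_dickson (p - 1)
    rw [h1, h2] at this
    rw [this, map_dickson, map_one, dickson_one_one_charP]
  rw [hS, qn_comp_aux]
end

section
/- Let p be a prime, ℓ ≥ 2 an integer, and k ≥ 1 an integer. Let m_δ ∈ ℤ[X] be an irreducible polynomial dividing the quantum number [ℓ] such that m_δ does not divide [n] for any 1 ≤ n < ℓ. Then there exists a polynomial F ∈ ℤ[X] such that [ℓ·p^k] = [ℓ·p^{k−1}] · ([p]^{p^{k−1}} · [ℓ]^{(p−1)·p^{k−1}} + p·F), and F is divisible neither by the constant polynomial p nor by m_δ in ℤ[X]. -/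
/-!
Write `D_m` for the Dickson polynomial `dickson 1 1 m`, so that `[a b] = [a] · ([b] ∘ D_a)`.
With `m = ℓ p^(k-1)` this gives `[ℓ p^k] = [m] · ([p] ∘ D_m)`, and `F` is defined by
`[p] ∘ D_m = ([p] [ℓ]^(p-1))^(p^(k-1)) + p F`. The congruence holds modulo `p` because `D_p ≡ X^p`
there, so that `[p b] ≡ [p] [b]^p` by Frobenius.

Modulo `[m]` one has `D_m ≡ -2 [m-1]` and `[m-1]² ≡ 1`, whence `[p] ∘ D_m ≡ p (-[m-1])^(p+1)`.
As `[ℓ]` is monic and divides `[m]`, this yields `F ≡ (-[m-1])^(p+1)` modulo `[ℓ]`, so `F` is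
coprime to `[ℓ]`. That excludes a common factor `m_δ`, and also `p ∣ F`, since `[ℓ]` is not a
unit modulo `p`.
-/

open Polynomial

lemma qn_zero : qn 0 = 0 := rfl

lemma qn_one : qn 1 = 1 := rfl

lemma qn_succ_sq_sub_X_mul_add_sq (n : ℕ) :
    qn (n + 1) ^ 2 - X * qn (n + 1) * qn n + qn n ^ 2 = 1 := by
  induction n with
  | zero => simp [qn_zero, qn_one]
  | succ n ih => rw [qn_add_two]; linear_combination ih

lemma isCoprime_qn_succ_qn (n : ℕ) : IsCoprime (qn (n + 1)) (qn n) :=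
  ⟨qn (n + 1) - X * qn n, qn n, by linear_combination qn_succ_sq_sub_X_mul_add_sq n⟩

lemma monic_qn_succ_and_natDegree (n : ℕ) :
    (qn (n + 1)).Monic ∧ (qn (n + 1)).natDegree = n := by
  induction n using Nat.twoStepInduction with
  | zero => exact ⟨monic_one, natDegree_one⟩
  | one => simp [qn_add_two, qn_one, qn_zero]
  | more n ih₁ ih₂ =>
    obtain ⟨hmon, hdeg⟩ := ih₂
    have hXmon : (X * qn (n + 2)).Monic := monic_X.mul hmon
    have hXdeg : (X * qn (n + 2)).natDegree = n + 2 := by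
      rw [monic_X.natDegree_mul hmon, natDegree_X, hdeg, add_comm]
    have hlt : (qn (n + 1)).natDegree < (X * qn (n + 2)).natDegree := by omega
    rw [qn_add_two]
    exact ⟨hXmon.sub_of_left (degree_lt_degree hlt),
      by rw [natDegree_sub_eq_left_of_natDegree_lt hlt, hXdeg]⟩

lemma monic_qn_succ (n : ℕ) : (qn (n + 1)).Monic := (monic_qn_succ_and_natDegree n).1

lemma natDegree_qn_succ (n : ℕ) : (qn (n + 1)).natDegree = n := (monic_qn_succ_and_natDegree n).2

lemma dickson_one_one_succ (n : ℕ) :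
    dickson 1 (1 : ℤ) (n + 1) = X * qn (n + 1) - 2 * qn n := by
  induction n using Nat.twoStepInduction with
  | zero => simp [qn_zero, qn_one]
  | one => rw [dickson_two, qn_add_two, qn_one, qn_zero, map_one, Nat.cast_one]; ring
  | more n ih₁ ih₂ =>
    rw [dickson_add_two, ih₁, ih₂, qn_add_two (n + 1), qn_add_two n, map_one]
    ring

lemma dickson_one_one_mul_qn_add (a t : ℕ) :
    dickson 1 (1 : ℤ) a * qn (t + a) = qn (t + 2 * a) + qn t := by
  induction a using Nat.twoStepInduction generalizing t with
  | zero => rw [dickson_zero, add_zero, mul_zero]; norm_num [two_mul]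
  | one => simp [qn_add_two]
  | more a ih₁ ih₂ =>
    have h₁ := ih₁ (t + 2)
    have h₂ := ih₂ (t + 1)
    rw [show t + 2 + a = t + (a + 2) by ring, show t + 2 + 2 * a = t + 2 * a + 2 by ring] at h₁
    rw [show t + 1 + (a + 1) = t + (a + 2) by ring,
      show t + 1 + 2 * (a + 1) = t + 2 * a + 2 + 1 by ring] at h₂
    rw [dickson_add_two, show t + 2 * (a + 2) = t + 2 * a + 2 + 2 by ring, qn_add_two]
    rw [qn_add_two t] at h₁
    rw [map_one, one_mul]
    linear_combination X * h₂ - h₁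

lemma qn_mul_s12 (a b : ℕ) : qn (a * b) = qn a * (qn b).comp (dickson 1 (1 : ℤ) a) := by
  induction b using Nat.twoStepInduction with
  | zero => simp [qn_zero]
  | one => simp [qn_one]
  | more b ih₁ ih₂ =>
    have h := dickson_one_one_mul_qn_add a (a * b)
    rw [show a * b + a = a * (b + 1) by ring, ih₂, ih₁] at h
    rw [show a * (b + 2) = a * b + 2 * a by ring, qn_add_two, sub_comp, mul_comp, X_comp]
    linear_combination -h

lemma qn_dvd_qn {a b : ℕ} (h : a ∣ b) : qn a ∣ qn b := by
  obtain ⟨c, rfl⟩ := h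
  exact qn_mul_s12 a c ▸ dvd_mul_right _ _

lemma Polynomial.sub_dvd_comp_sub {R : Type*} [CommRing R] (f a b : R[X]) :
    a - b ∣ f.comp a - f.comp b := by
  have h := sub_dvd_eval_sub a b (f.map C)
  rwa [eval_map, eval_map] at h

lemma sq_sub_one_dvd_qn_comp_two_mul_sub (n : ℕ) (u : ℤ[X]) :
    u ^ 2 - 1 ∣ (qn n).comp (2 * u) - n * u ^ (n + 1) := by
  induction n using Nat.twoStepInduction with
  | zero => simp [qn_zero]
  | one => exact ⟨-1, by simp [qn_one]⟩
  | more n ih₁ ih₂ =>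
    obtain ⟨a, ha⟩ := ih₁
    obtain ⟨b, hb⟩ := ih₂
    refine ⟨2 * u * b - a + n * u ^ (n + 1), ?_⟩
    rw [qn_add_two, sub_comp, mul_comp, X_comp]
    push_cast at hb ⊢
    linear_combination 2 * u * hb - ha

lemma qn_dvd_qn_comp_dickson_sub (n m : ℕ) :
    qn (m + 1) ∣ (qn n).comp (dickson 1 (1 : ℤ) (m + 1)) - n * (-qn m) ^ (n + 1) := by
  have h₁ := (qn n).sub_dvd_comp_sub (dickson 1 1 (m + 1)) (2 * -qn m)
  rw [dickson_one_one_succ] at h₁ ⊢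
  rw [show X * qn (m + 1) - 2 * qn m - 2 * -qn m = qn (m + 1) * X by ring] at h₁
  have h₂ : qn (m + 1) ∣ (-qn m) ^ 2 - 1 :=
    ⟨X * qn m - qn (m + 1), by linear_combination qn_succ_sq_sub_X_mul_add_sq m⟩
  have := (dvd_of_mul_right_dvd h₁).add (h₂.trans (sq_sub_one_dvd_qn_comp_two_mul_sub n _))
  rwa [sub_add_sub_cancel] at this

lemma Polynomial.Monic.dvd_of_dvd_C_mul {R : Type*} [CommRing R] [IsDomain R] {f g : R[X]}
    (hf : f.Monic) {c : R} (hc : c ≠ 0) (h : f ∣ C c * g) : f ∣ g := by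
  rw [← modByMonic_eq_zero_iff_dvd hf, ← smul_eq_C_mul, smul_modByMonic] at h
  rw [← modByMonic_eq_zero_iff_dvd hf]
  exact (smul_eq_zero.mp h).resolve_left hc

lemma Polynomial.natCast_dvd_sub_of_map_eq {p : ℕ} {f g : ℤ[X]}
    (h : f.map (Int.castRingHom (ZMod p)) = g.map (Int.castRingHom (ZMod p))) :
    (p : ℤ[X]) ∣ f - g := by
  rw [← C_eq_natCast, C_dvd_iff_dvd_coeff]
  intro i
  have hi := congr_arg (coeff · i) h
  simp only [coeff_map, eq_intCast] at hi
  rw [coeff_sub]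
  exact (ZMod.intCast_eq_intCast_iff_dvd_sub _ _ _).mp hi.symm

section ModP

variable (p : ℕ) [Fact p.Prime]

lemma map_dickson_one_one_prime :
    (dickson 1 (1 : ℤ) p).map (Int.castRingHom (ZMod p)) = X ^ p := by
  rw [map_dickson, map_one, dickson_one_one_zmod_p]

lemma map_qn_prime_mul (b : ℕ) :
    (qn (p * b)).map (Int.castRingHom (ZMod p)) =
      (qn p).map (Int.castRingHom (ZMod p)) * (qn b).map (Int.castRingHom (ZMod p)) ^ p := by
  rw [qn_mul_s12, Polynomial.map_mul, map_comp, map_dickson_one_one_prime, ← expand_eq_comp_X_pow,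
    ZMod.expand_card]

lemma map_qn_prime_comp_dickson {b : ℕ} (hb : b ≠ 0) :
    ((qn p).comp (dickson 1 1 b)).map (Int.castRingHom (ZMod p)) =
      (qn p).map (Int.castRingHom (ZMod p)) *
        (qn b).map (Int.castRingHom (ZMod p)) ^ (p - 1) := by
  obtain ⟨b, rfl⟩ := Nat.exists_eq_succ_of_ne_zero hb
  apply mul_left_cancel₀ ((monic_qn_succ b).map (Int.castRingHom (ZMod p))).ne_zero
  rw [← Polynomial.map_mul, ← qn_mul_s12, mul_comm, map_qn_prime_mul, mul_left_comm, ← pow_succ',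
    Nat.sub_add_cancel (Fact.out : p.Prime).one_le]

lemma map_qn_prime_comp_dickson_mul_prime_pow {ℓ : ℕ} (hℓ : ℓ ≠ 0) (j : ℕ) :
    ((qn p).comp (dickson 1 1 (ℓ * p ^ j))).map (Int.castRingHom (ZMod p)) =
      ((qn p * qn ℓ ^ (p - 1)) ^ p ^ j).map (Int.castRingHom (ZMod p)) := by
  have hp := (Fact.out : p.Prime).one_le
  rw [map_qn_prime_comp_dickson p (by positivity)]
  induction j with
  | zero => simp
  | succ j ih =>
    rw [pow_succ, ← mul_assoc, mul_comm _ p, map_qn_prime_mul, pow_mul, Polynomial.map_pow,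
      ← ih, mul_pow, ← mul_assoc, ← pow_succ', Nat.sub_add_cancel hp, ← pow_mul, mul_comm p,
      pow_mul, ← mul_pow]

end ModP

lemma isCoprime_qn_of_comp_dickson_sub_eq {ℓ m n : ℕ} (hℓm : ℓ ∣ m) (hm : m ≠ 0)
    (hn : n ≠ 0) {F H : ℤ[X]} (hH : qn ℓ ∣ H)
    (hF : (qn n).comp (dickson 1 1 m) - H = n * F) :
    IsCoprime (qn ℓ) F := by
  obtain ⟨ℓ, rfl⟩ := Nat.exists_eq_succ_of_ne_zero (ne_zero_of_dvd_ne_zero hm hℓm)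
  obtain ⟨m, rfl⟩ := Nat.exists_eq_succ_of_ne_zero hm
  have hdvd := qn_dvd_qn hℓm
  have h : qn (ℓ + 1) ∣ C (n : ℤ) * (F - (-qn m) ^ (n + 1)) := by
    have := (hdvd.trans (qn_dvd_qn_comp_dickson_sub n m)).sub hH
    rwa [C_eq_natCast, mul_sub, ← hF, sub_right_comm]
  obtain ⟨t, ht⟩ := (monic_qn_succ ℓ).dvd_of_dvd_C_mul (Int.natCast_ne_zero.mpr hn) h
  rw [sub_eq_iff_eq_add'.mp ht]
  have hcop := ((isCoprime_qn_succ_qn m).of_isCoprime_of_dvd_left hdvd).neg_right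
  exact hcop.pow_right.add_mul_left_right t

lemma not_isCoprime_qn_natCast {p : ℕ} (hp : p.Prime) {ℓ : ℕ} (hℓ : 2 ≤ ℓ) :
    ¬ IsCoprime (qn ℓ) (p : ℤ[X]) := by
  have := Fact.mk hp
  obtain ⟨ℓ, rfl⟩ : ∃ n, ℓ = n + 1 := ⟨ℓ - 1, by omega⟩
  intro h
  have hunit := isCoprime_zero_right.mp
    (by simpa using h.map (mapRingHom (Int.castRingHom (ZMod p))))
  have := natDegree_eq_zero_of_isUnit hunit
  rw [(monic_qn_succ ℓ).natDegree_map, natDegree_qn_succ] at this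
  omega

theorem qn_mul_prime_pow_decomposition_general (p : ℕ) (hp : p.Prime) (ℓ k : ℕ)
    (hℓ : 2 ≤ ℓ) (hk : 1 ≤ k)
    (mδ : Polynomial ℤ) (hirr : Irreducible mδ) (hdvd : mδ ∣ qn ℓ) :
    ∃ F : Polynomial ℤ,
      qn (ℓ * p ^ k) =
        qn (ℓ * p ^ (k - 1)) *
          ((qn p) ^ (p ^ (k - 1)) * (qn ℓ) ^ ((p - 1) * p ^ (k - 1)) + (p : Polynomial ℤ) * F) ∧
      ¬ (p : Polynomial ℤ) ∣ F ∧ ¬ mδ ∣ F := by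
  have := Fact.mk hp
  have hp₂ := hp.two_le
  set P := p ^ (k - 1)
  have hsplit : qn (ℓ * p ^ k) = qn (ℓ * P) * (qn p).comp (dickson 1 1 (ℓ * P)) := by
    rw [← qn_mul_s12, mul_assoc, ← pow_succ, Nat.sub_add_cancel hk]
  obtain ⟨F, hF⟩ := natCast_dvd_sub_of_map_eq
    (map_qn_prime_comp_dickson_mul_prime_pow p (ℓ := ℓ) (by omega) (k - 1))
  have hcop : IsCoprime (qn ℓ) F :=
    isCoprime_qn_of_comp_dickson_sub_eq (dvd_mul_right ℓ P) (by positivity) hp.ne_zero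
      (dvd_pow (dvd_mul_of_dvd_right (dvd_pow_self _ (by omega)) _) (by positivity)) hF
  refine ⟨F, ?_, ?_, fun h => hirr.not_isUnit (hcop.isUnit_of_dvd' hdvd h)⟩
  · rw [hsplit, ← hF]
    ring
  · rintro ⟨F', rfl⟩
    exact not_isCoprime_qn_natCast hp hℓ hcop.of_mul_right_left

/-- For a prime `p`, `ℓ ≥ 2`, `k ≥ 1`, and an irreducible `m_δ ∈ ℤ[X]` dividing `[ℓ]` but no
`[n]` for `1 ≤ n < ℓ`, there is `F ∈ ℤ[X]` with
`[ℓ·p^k] = [ℓ·p^(k−1)] · ([p]^(p^(k−1)) · [ℓ]^((p−1)·p^(k−1)) + p·F)` and `F` divisible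
neither by `p` nor by `m_δ`. -/
theorem qn_mul_prime_pow_decomposition (p : ℕ) (hp : p.Prime) (ℓ k : ℕ)
    (hℓ : 2 ≤ ℓ) (hk : 1 ≤ k)
    (mδ : Polynomial ℤ) (hirr : Irreducible mδ) (hdvd : mδ ∣ qn ℓ)
    (hnotdvd : ∀ n : ℕ, 1 ≤ n → n < ℓ → ¬ mδ ∣ qn n) :
    ∃ F : Polynomial ℤ,
      qn (ℓ * p ^ k) =
        qn (ℓ * p ^ (k - 1)) *
          ((qn p) ^ (p ^ (k - 1)) * (qn ℓ) ^ ((p - 1) * p ^ (k - 1)) + (p : Polynomial ℤ) * F) ∧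
      ¬ (p : Polynomial ℤ) ∣ F ∧ ¬ mδ ∣ F :=
  qn_mul_prime_pow_decomposition_general p hp ℓ k hℓ hk mδ hirr hdvd
end

section
/- Fix integers ℓ ≥ 2 and p ≥ 2, and let m be a natural number with (ℓ,p)-adic digits (m_i)_{i≥0}. If S and S' are up-admissible sets for m with S ⊆ S', then there exist up-admissible sets S = S_1 ⊆ S_2 ⊆ ⋯ ⊆ S_k = S' for m such that |S_i| = |S_{i−1}| + 1 for all 1 < i ≤ k. -/
/-- The mixed base: `p^{(0)} = 1` and `p^{(i)} = ℓ·p^{i−1}` for `i ≥ 1`. -/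
def mixedPow (ℓ p : ℕ) : ℕ → ℕ
  | 0 => 1
  | i + 1 => ℓ * p ^ i

/-- `S` is up-admissible for the digit sequence `d` (with digits `< ℓ` in position `0` and
`< p` in positions `≥ 1`): the digit at the minimum of every maximal stretch of `S` is
nonzero, and whenever `s ∈ S` and the digit at `s + 1` equals `p − 1`, also `s + 1 ∈ S`. -/
def UpAdmissible (p : ℕ) (d : ℕ → ℕ) (S : Finset ℕ) : Prop :=
  (∀ s ∈ S, (s = 0 ∨ s - 1 ∉ S) → d s ≠ 0) ∧
  (∀ s ∈ S, d (s + 1) = p - 1 → s + 1 ∈ S)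

/-!
It suffices to add one element of `S' \ S` to `S` while staying up-admissible. Start
at the least element `t` of `S' \ S`; it may start a new stretch because `t - 1 ∉ S'`, so its digit
is nonzero. If the current element `x` breaks the second condition, then `x + 1` has digit
`p - 1 ≠ 0` and lies in `S' \ S`, so move on to `x + 1`. This walk stays in the finite set `S'`,
hence it stops at an element that can be added.
-/

theorem Nat.exists_of_forall_or_succ {Q G : ℕ → Prop} {t B : ℕ} (ht : Q t)
    (hstep : ∀ x, Q x → G x ∨ Q (x + 1)) (hbound : ∀ x, Q x → x ≤ B) :
    ∃ x, Q x ∧ G x := by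
  by_contra! hG
  have hQ : ∀ n, Q (t + n) := by
    intro n
    induction n with
    | zero => exact ht
    | succ n ih => exact (hstep _ ih).resolve_left (hG _ ih)
  have := hbound _ (hQ (B + 1))
  omega

theorem Finset.exists_chain_of_exists_insert {α : Type*} [DecidableEq α] {P : Finset α → Prop}
    {S' : Finset α} (hstep : ∀ S ⊂ S', P S → ∃ x ∈ S' \ S, P (insert x S))
    (S : Finset α) (hSS' : S ⊆ S') (hS : P S) :
    ∃ (k : ℕ) (T : Fin (k + 1) → Finset α),
      T 0 = S ∧ T (Fin.last k) = S' ∧ (∀ i, P (T i)) ∧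
      (∀ i : Fin k, T i.castSucc ⊆ T i.succ ∧ (T i.succ).card = (T i.castSucc).card + 1) := by
  by_cases hSeq : S = S'
  · exact ⟨0, fun _ => S, rfl, hSeq, fun _ => hS, fun i => i.elim0⟩
  obtain ⟨x, hx, hins⟩ := hstep S (hSS'.ssubset_of_ne hSeq) hS
  obtain ⟨k, T, hT0, hTlast, hTP, hTstep⟩ := exists_chain_of_exists_insert hstep (insert x S)
    (insert_subset (mem_sdiff.mp hx).1 hSS') hins
  refine ⟨k + 1, Fin.cons S T, rfl, by simpa [← Fin.succ_last] using hTlast, ?_, ?_⟩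
  · exact Fin.cases hS (by simpa using hTP)
  · refine Fin.cases ?_ fun i => ?_
    · simpa [hT0] using card_insert_of_notMem (mem_sdiff.mp hx).2
    · simpa [← Fin.succ_castSucc] using hTstep i
termination_by (S' \ S).card
decreasing_by rw [sdiff_insert]; exact card_erase_lt_of_mem hx

section

variable {p : ℕ} {d : ℕ → ℕ} {S S' : Finset ℕ}

theorem upAdmissible_insert (hS : UpAdmissible p d S) {x : ℕ}
    (hstart : x = 0 ∨ x - 1 ∉ S → d x ≠ 0)
    (hnext : d (x + 1) = p - 1 → x + 1 ∈ S) : UpAdmissible p d (insert x S) := by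
  have hstart' : ∀ s, s = 0 ∨ s - 1 ∉ insert x S → s = 0 ∨ s - 1 ∉ S :=
    fun _ => Or.imp_right fun h h' => h (Finset.mem_insert_of_mem h')
  constructor
  · intro s hs hs0
    rcases Finset.mem_insert.mp hs with rfl | hs
    · exact hstart (hstart' s hs0)
    · exact hS.1 s hs (hstart' s hs0)
  · intro s hs hd
    rcases Finset.mem_insert.mp hs with rfl | hs
    · exact Finset.mem_insert_of_mem (hnext hd)
    · exact Finset.mem_insert_of_mem (hS.2 s hs hd)

theorem UpAdmissible.exists_upAdmissible_insert (hp : 2 ≤ p) (hS : UpAdmissible p d S)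
    (hS' : UpAdmissible p d S') (hlt : S ⊂ S') : ∃ x ∈ S' \ S, UpAdmissible p d (insert x S) := by
  have hne : (S' \ S).Nonempty := Finset.sdiff_nonempty.mpr hlt.2
  set t := (S' \ S).min' hne
  have ht : t ∈ S' \ S := Finset.min'_mem _ _
  have hstart_t : t = 0 ∨ t - 1 ∉ S → d t ≠ 0 := by
    intro h
    refine hS'.1 t (Finset.mem_sdiff.mp ht).1 (or_iff_not_imp_left.mpr fun ht0 hmem => ?_)
    have := Finset.min'_le _ _ (Finset.mem_sdiff.mpr ⟨hmem, h.resolve_left ht0⟩)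
    omega
  have hwalk : ∀ x, x ∈ S' \ S ∧ (x = 0 ∨ x - 1 ∉ S → d x ≠ 0) →
      (d (x + 1) = p - 1 → x + 1 ∈ S) ∨
      (x + 1 ∈ S' \ S ∧ (x + 1 = 0 ∨ x + 1 - 1 ∉ S → d (x + 1) ≠ 0)) := by
    rintro x ⟨hx, -⟩
    by_cases hnext : d (x + 1) = p - 1 → x + 1 ∈ S
    · exact Or.inl hnext
    · rw [Classical.not_imp] at hnext
      have hx1 : x + 1 ∈ S' := hS'.2 x (Finset.mem_sdiff.mp hx).1 hnext.1
      exact Or.inr ⟨Finset.mem_sdiff.mpr ⟨hx1, hnext.2⟩, fun _ => by omega⟩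
  obtain ⟨x, ⟨hx, hstart⟩, hnext⟩ := Nat.exists_of_forall_or_succ ⟨ht, hstart_t⟩ hwalk
    (B := S'.sup id) fun x hx => Finset.le_sup (f := id) (Finset.mem_sdiff.mp hx.1).1
  exact ⟨x, hx, upAdmissible_insert hS hstart hnext⟩

end

theorem exists_upAdmissible_chain_general (p : ℕ) (hp : 2 ≤ p)
    (d : ℕ → ℕ)
    (S S' : Finset ℕ) (hS : UpAdmissible p d S) (hS' : UpAdmissible p d S')
    (hss : S ⊆ S') :
    ∃ (k : ℕ) (T : Fin (k + 1) → Finset ℕ),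
      T 0 = S ∧ T (Fin.last k) = S' ∧
      (∀ i, UpAdmissible p d (T i)) ∧
      (∀ i : Fin k, T i.castSucc ⊆ T i.succ ∧ (T i.succ).card = (T i.castSucc).card + 1) :=
  Finset.exists_chain_of_exists_insert (fun _ hlt hT => hT.exists_upAdmissible_insert hp hS' hlt)
    S hss hS

/-- Between two nested up-admissible sets `S ⊆ S'` for `m` there is a chain of up-admissible
sets increasing one element at a time. -/
theorem exists_upAdmissible_chain (ℓ p : ℕ) (hℓ : 2 ≤ ℓ) (hp : 2 ≤ p)
    (m N : ℕ) (d : ℕ → ℕ)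
    (hdN : ∀ i, N ≤ i → d i = 0) (hd0 : d 0 < ℓ) (hdi : ∀ i, 1 ≤ i → d i < p)
    (hsum : m + 1 = ∑ i ∈ Finset.range N, d i * mixedPow ℓ p i)
    (S S' : Finset ℕ) (hS : UpAdmissible p d S) (hS' : UpAdmissible p d S')
    (hss : S ⊆ S') :
    ∃ (k : ℕ) (T : Fin (k + 1) → Finset ℕ),
      T 0 = S ∧ T (Fin.last k) = S' ∧
      (∀ i, UpAdmissible p d (T i)) ∧
      (∀ i : Fin k, T i.castSucc ⊆ T i.succ ∧ (T i.succ).card = (T i.castSucc).card + 1) :=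
  exists_upAdmissible_chain_general p hp d S S' hS hS' hss
end
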